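/- arXiv:1609.08873 — 4 statements merged into one kernel-verified Lean document; each statement's English description precedes it below -/
import Mathlib

section
/- For every finite index set Σ, the 𝔽_p-vector space 𝒱_Σ is stable under all the Hasse derivatives in θ: D_n(𝒱_Σ) ⊆ 𝒱_Σ for every integer n ≥ 0. -/
/- Proposition 8 of Pellarin, "A sum-shuffle formula for zeta values in Tate algebras":
the `𝔽_p`-vector space `𝒱_Σ` is stable under all Hasse derivatives in `θ`. -/

set_option synthInstance.maxHeartbeats 1000000
set_option maxHeartbeats 1000000

noncomputable section

namespace HasseStability

variable (p e : ℕ) [Fact p.Prime] (σ : Type) [Fintype σ] [DecidableEq σ]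

abbrev Fq : Type := GaloisField p e

instance : Fintype (Fq p e) := Fintype.ofFinite _

/-- `𝔽_q[θ][t_i : i ∈ Σ]`, viewed as polynomials in `θ` over `𝔽_q[t_i : i ∈ Σ]`. -/
abbrev Rθ : Type := Polynomial (MvPolynomial σ (Fq p e))

/-- `P_U = [1]·S_1(1; σ_U) = Σ_{λ∈𝔽_q} ((θ-λ)^{q-1} - 1)·∏_{i∈U}(t_i - λ)`. -/
def P (U : Finset σ) : Rθ p e σ :=
  ∑ l : Fq p e,
    ((Polynomial.X - Polynomial.C (MvPolynomial.C l)) ^ (p ^ e - 1) - 1) *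
      Polynomial.C (∏ i ∈ U, (MvPolynomial.X i - MvPolynomial.C l))

/-- `𝒱_U`: the `𝔽_p`-linear span of the polynomials `P_W`, `W ⊆ U`. -/
def V (U : Finset σ) : Submodule (ZMod p) (Rθ p e σ) :=
  Submodule.span (ZMod p) {x | ∃ W ⊆ U, x = P p e σ W}

/-! ### Auxiliary lemmas -/

section Aux

open Polynomial Finset

variable {p e σ}

/-- The power sum over a finite field. -/
lemma sum_pow_field {K : Type*} [Field K] [Fintype K] [DecidableEq K] (E : ℕ) :
    ∑ x : K, x ^ E =
      if E ≠ 0 ∧ (Fintype.card K - 1) ∣ E then (-1 : K) else 0 := by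
  rcases eq_or_ne E 0 with rfl | hE
  · simp [FiniteField.cast_card_eq_zero]
  · have h0 : (0 : K) ^ E = 0 := zero_pow hE
    have key : ∑ x : K, x ^ E = ∑ x : Kˣ, (x : K) ^ E := by
      let φ : Kˣ ↪ K := ⟨fun x => x, fun _ _ h => Units.ext h⟩
      have huniv : (Finset.univ.map φ) = Finset.univ \ {0} := by
        ext x
        simp only [mem_map, mem_univ, Function.Embedding.coeFn_mk, true_and, mem_sdiff,
          mem_singleton, φ]
        constructor
        · rintro ⟨u, rfl⟩; exact (u.ne_zero)
        · intro hx; exact ⟨Units.mk0 x hx, rfl⟩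
      rw [show (Finset.univ : Finset K) = insert (0 : K) (Finset.univ \ {0}) by
          ext x; by_cases hx : x = 0 <;> simp [hx]]
      rw [Finset.sum_insert (by simp), h0, zero_add, ← huniv, Finset.sum_map]
      rfl
    rw [key, FiniteField.sum_pow_units]
    simp [hE]

variable [Fact (Nat.Prime p)]

lemma card_Fq (he : 1 ≤ e) : Fintype.card (Fq p e) = p ^ e := by
  rw [← Nat.card_eq_fintype_card, GaloisField.card p e (by omega)]

lemma q_pos : 1 ≤ p ^ e := Nat.one_le_pow _ _ (Fact.out (p := p.Prime)).pos

lemma q_ge_two (he : 1 ≤ e) : 2 ≤ p ^ e := by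
  calc 2 ≤ p := (Fact.out (p := p.Prime)).two_le
  _ = p ^ 1 := (pow_one p).symm
  _ ≤ p ^ e := Nat.pow_le_pow_right (Fact.out (p := p.Prime)).pos he

/-- Degree bound for `P`. -/
lemma natDegree_P_le (W : Finset σ) : (P p e σ W).natDegree ≤ p ^ e - 1 := by
  refine natDegree_sum_le_of_forall_le _ _ fun l _ => ?_
  refine (natDegree_mul_le).trans ?_
  rw [natDegree_C, add_zero]
  refine (natDegree_sub_le _ _).trans ?_
  simp only [natDegree_one, max_le_iff]
  constructor
  · refine (natDegree_pow_le).trans ?_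
    rw [natDegree_X_sub_C, mul_one]
  · exact Nat.zero_le _

/-- Evaluation of `P W` at a point `C ν`, `ν ∈ 𝔽_q`. -/
lemma eval_P (he : 1 ≤ e) (W : Finset σ) (ν : Fq p e) :
    (P p e σ W).eval (MvPolynomial.C ν) =
      - ∏ i ∈ W, (MvPolynomial.X i - MvPolynomial.C ν) := by
  classical
  unfold P
  rw [eval_finset_sum]
  rw [Finset.sum_eq_single ν]
  · simp only [eval_mul, eval_sub, eval_pow, eval_X, eval_C, eval_one, sub_self]
    rw [zero_pow (by have := q_ge_two (p := p) (e := e) he; omega), zero_sub, neg_one_mul]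
  · intro l _ hl
    have hne : ν - l ≠ 0 := sub_ne_zero.mpr (by exact fun h => hl h.symm)
    have : (MvPolynomial.C ν - MvPolynomial.C l : MvPolynomial σ (Fq p e)) ^ (p ^ e - 1) = 1 := by
      rw [← map_sub, ← map_pow, ← card_Fq (p := p) he,
        FiniteField.pow_card_sub_one_eq_one _ hne, map_one]
    simp [this]
  · intro h; exact absurd (Finset.mem_univ ν) h

/-- coefficient of the Taylor expansion of each summand of `P`. -/
lemma coeff_taylor_term {R : Type*} [CommRing R] (a b c : R) (m n : ℕ) (hn : 1 ≤ n) :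
    ((Polynomial.taylor a) (((X - Polynomial.C b) ^ m - 1) * Polynomial.C c)).coeff n
      = (a - b) ^ (m - n) * (m.choose n : R) * c := by
  rw [taylor_apply, mul_comp, sub_comp, pow_comp, sub_comp, X_comp, C_comp, one_comp, C_comp]
  rw [coeff_mul_C, coeff_sub, coeff_one, if_neg (by omega)]
  rw [show (X + Polynomial.C a - Polynomial.C b : Polynomial R)
        = X + Polynomial.C (a - b) by rw [map_sub]; ring]
  rw [coeff_X_add_C_pow, sub_zero]

/-- The key evaluation of the Hasse derivative of `P U` at `C ν`. -/
lemma eval_hasseDeriv_P (he : 1 ≤ e) (U : Finset σ) (ν : Fq p e) (n : ℕ) (hn : 1 ≤ n) :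
    (Polynomial.hasseDeriv n (P p e σ U)).eval (MvPolynomial.C ν) =
      ((p ^ e - 1).choose n : MvPolynomial σ (Fq p e)) *
        ∑ W ∈ U.powerset,
          (if (p ^ e - 1 - n + (U \ W).card ≠ 0 ∧
                (p ^ e - 1) ∣ (p ^ e - 1 - n + (U \ W).card))
            then (-1 : MvPolynomial σ (Fq p e)) else 0) *
            ∏ i ∈ W, (MvPolynomial.X i - MvPolynomial.C ν) := by
  classical
  rw [← taylor_coeff]
  unfold P
  rw [map_sum, finset_sum_coeff]
  calc
    ∑ l : Fq p e, ((Polynomial.taylor (MvPolynomial.C ν))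
        (((X - Polynomial.C (MvPolynomial.C l)) ^ (p ^ e - 1) - 1) *
          Polynomial.C (∏ i ∈ U, (MvPolynomial.X i - MvPolynomial.C l)))).coeff n
      = ∑ l : Fq p e, (MvPolynomial.C (ν - l) : MvPolynomial σ (Fq p e)) ^ (p ^ e - 1 - n) * ((p ^ e - 1).choose n : MvPolynomial σ (Fq p e)) *
          ∏ i ∈ U, (MvPolynomial.X i - MvPolynomial.C l) := by
        refine Finset.sum_congr rfl fun l _ => ?_
        rw [coeff_taylor_term _ _ _ _ _ hn, map_sub]
    _ = ∑ μ : Fq p e, (MvPolynomial.C μ : MvPolynomial σ (Fq p e)) ^ (p ^ e - 1 - n) * ((p ^ e - 1).choose n : MvPolynomial σ (Fq p e)) *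
          ∏ i ∈ U, ((MvPolynomial.X i - MvPolynomial.C ν) + MvPolynomial.C μ) := by
        rw [← Equiv.sum_comp (Equiv.subLeft ν)
          (fun l : Fq p e => (MvPolynomial.C (ν - l) : MvPolynomial σ (Fq p e)) ^ (p ^ e - 1 - n) * ((p ^ e - 1).choose n : MvPolynomial σ (Fq p e)) *
            ∏ i ∈ U, (MvPolynomial.X i - MvPolynomial.C l))]
        refine Finset.sum_congr rfl fun μ _ => ?_
        simp only [Equiv.subLeft_apply, sub_sub_cancel]
        congr 1
        refine Finset.prod_congr rfl fun i _ => ?_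
        rw [map_sub]; ring
    _ = ∑ μ : Fq p e, ∑ W ∈ U.powerset,
          (MvPolynomial.C μ : MvPolynomial σ (Fq p e)) ^ (p ^ e - 1 - n + (U \ W).card) * ((p ^ e - 1).choose n : MvPolynomial σ (Fq p e)) *
            ∏ i ∈ W, (MvPolynomial.X i - MvPolynomial.C ν) := by
        refine Finset.sum_congr rfl fun μ _ => ?_
        rw [Finset.prod_add, Finset.mul_sum]
        refine Finset.sum_congr rfl fun W _ => ?_
        rw [Finset.prod_const, pow_add]
        ring
    _ = ∑ W ∈ U.powerset,
          (∑ μ : Fq p e, (MvPolynomial.C μ : MvPolynomial σ (Fq p e)) ^ (p ^ e - 1 - n + (U \ W).card)) * ((p ^ e - 1).choose n : MvPolynomial σ (Fq p e)) *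
            ∏ i ∈ W, (MvPolynomial.X i - MvPolynomial.C ν) := by
        rw [Finset.sum_comm]
        refine Finset.sum_congr rfl fun W _ => ?_
        rw [← Finset.sum_mul, ← Finset.sum_mul]
    _ = ∑ W ∈ U.powerset,
          (if (p ^ e - 1 - n + (U \ W).card ≠ 0 ∧ (p ^ e - 1) ∣ (p ^ e - 1 - n + (U \ W).card))
            then (-1 : MvPolynomial σ (Fq p e)) else 0) * ((p ^ e - 1).choose n : MvPolynomial σ (Fq p e)) *
            ∏ i ∈ W, (MvPolynomial.X i - MvPolynomial.C ν) := by
        refine Finset.sum_congr rfl fun W _ => ?_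
        congr 1
        congr 1
        have : ∑ μ : Fq p e, (MvPolynomial.C μ : MvPolynomial σ (Fq p e)) ^ (p ^ e - 1 - n + (U \ W).card)
            = MvPolynomial.C (∑ μ : Fq p e, μ ^ (p ^ e - 1 - n + (U \ W).card)) := by
          rw [map_sum]
          exact Finset.sum_congr rfl fun μ _ => (map_pow _ _ _).symm
        rw [this, sum_pow_field, card_Fq (p := p) he]
        split_ifs with h
        · rw [map_neg, map_one]
        · exact map_zero _
    _ = ((p ^ e - 1).choose n : MvPolynomial σ (Fq p e)) * ∑ W ∈ U.powerset,
          (if (p ^ e - 1 - n + (U \ W).card ≠ 0 ∧ (p ^ e - 1) ∣ (p ^ e - 1 - n + (U \ W).card))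
            then (-1 : MvPolynomial σ (Fq p e)) else 0) *
            ∏ i ∈ W, (MvPolynomial.X i - MvPolynomial.C ν) := by
        rw [Finset.mul_sum]
        exact Finset.sum_congr rfl fun W _ => by ring

/-- `D_n P_U = 0` for `n ≥ q`. -/
lemma hasseDeriv_P_eq_zero (U : Finset σ) (n : ℕ) (hn : p ^ e ≤ n) :
    Polynomial.hasseDeriv n (P p e σ U) = 0 := by
  ext k
  rw [hasseDeriv_coeff, coeff_zero, coeff_eq_zero_of_natDegree_lt, mul_zero]
  calc (P p e σ U).natDegree ≤ p ^ e - 1 := natDegree_P_le U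
    _ < p ^ e := by have := q_pos (p := p) (e := e); omega
    _ ≤ k + n := by omega

/-- The main identity: for `1 ≤ n ≤ q - 1`,
`D_n P_U = C(q-1, n) • ∑_{W ⊆ U, cond} P_W`. -/
lemma hasseDeriv_P_eq (he : 1 ≤ e) (U : Finset σ) (n : ℕ) (hn1 : 1 ≤ n)
    (hn2 : n ≤ p ^ e - 1) :
    Polynomial.hasseDeriv n (P p e σ U) =
      (p ^ e - 1).choose n •
        ∑ W ∈ U.powerset.filter (fun W =>
            p ^ e - 1 - n + (U \ W).card ≠ 0 ∧
              (p ^ e - 1) ∣ (p ^ e - 1 - n + (U \ W).card)), P p e σ W := by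
  classical
  have hqpos : 2 ≤ p ^ e := q_ge_two (p := p) he
  rw [← sub_eq_zero]
  apply Polynomial.eq_zero_of_natDegree_lt_card_of_eval_eq_zero' _
      ((Finset.univ : Finset (Fq p e)).image (MvPolynomial.C))
  · intro x hx
    obtain ⟨ν, -, rfl⟩ := Finset.mem_image.mp hx
    rw [eval_sub, sub_eq_zero, eval_hasseDeriv_P he U ν n hn1, nsmul_eq_mul, eval_mul,
      eval_natCast, eval_finset_sum,
      Finset.sum_congr rfl (fun W _ => eval_P he W ν), Finset.sum_filter]
    congr 1
    refine Finset.sum_congr rfl fun W _ => ?_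
    split_ifs with h
    · ring
    · simp
  · have h1 : (Polynomial.hasseDeriv n (P p e σ U)).natDegree ≤ p ^ e - 1 :=
      (Polynomial.natDegree_hasseDeriv_le _ _).trans
        (le_trans (Nat.sub_le _ _) (natDegree_P_le U))
    have h2 : ((p ^ e - 1).choose n •
        ∑ W ∈ U.powerset.filter (fun W =>
            p ^ e - 1 - n + (U \ W).card ≠ 0 ∧
              (p ^ e - 1) ∣ (p ^ e - 1 - n + (U \ W).card)),
          P p e σ W).natDegree ≤ p ^ e - 1 := by
      rw [nsmul_eq_mul]
      refine Polynomial.natDegree_mul_le.trans ?_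
      rw [Polynomial.natDegree_natCast, zero_add]
      exact natDegree_sum_le_of_forall_le _ _ fun W _ => natDegree_P_le W
    have hcard : ((Finset.univ : Finset (Fq p e)).image
        (MvPolynomial.C : Fq p e → MvPolynomial σ (Fq p e))).card = p ^ e := by
      rw [Finset.card_image_of_injective _ (MvPolynomial.C_injective _ _),
        Finset.card_univ, card_Fq (p := p) he]
    rw [hcard]
    calc (Polynomial.hasseDeriv n (P p e σ U) - _).natDegree
        ≤ max (Polynomial.hasseDeriv n (P p e σ U)).natDegree _ :=
          Polynomial.natDegree_sub_le _ _
      _ ≤ p ^ e - 1 := max_le h1 h2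
      _ < p ^ e := by omega

/-- Linearity of Hasse derivatives for the `ZMod p` action. -/
lemma hasseDeriv_zmod_smul (n : ℕ) (r : ZMod p) (x : Rθ p e σ) :
    Polynomial.hasseDeriv n (r • x) = r • Polynomial.hasseDeriv n x := by
  rw [← algebraMap_smul (MvPolynomial σ (Fq p e)) r x, map_smul,
    algebraMap_smul]

end Aux

open Polynomial in
/-- **Proposition 8**: `𝒱_Σ` is stable under all Hasse derivatives `D_n` in `θ`. -/
theorem V_stable_hasseDeriv (he : 1 ≤ e) (n : ℕ) (x : Rθ p e σ)
    (hx : x ∈ V p e σ Finset.univ) :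
    Polynomial.hasseDeriv n x ∈ V p e σ Finset.univ := by
  classical
  induction hx using Submodule.span_induction with
  | mem x hxmem =>
    obtain ⟨W, -, rfl⟩ := hxmem
    rcases Nat.eq_zero_or_pos n with rfl | hn1
    · rw [hasseDeriv_zero, LinearMap.id_apply]
      exact Submodule.subset_span ⟨W, Finset.subset_univ W, rfl⟩
    rcases le_or_gt (p ^ e) n with hn2 | hn2
    · rw [hasseDeriv_P_eq_zero W n hn2]
      exact Submodule.zero_mem _
    · have hn2' : n ≤ p ^ e - 1 := by omega
      rw [hasseDeriv_P_eq he W n hn1 hn2']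
      rw [← Nat.cast_smul_eq_nsmul (ZMod p)]
      refine Submodule.smul_mem _ _ (Submodule.sum_mem _ fun W' _ => ?_)
      exact Submodule.subset_span ⟨W', Finset.subset_univ W', rfl⟩
  | zero => rw [map_zero]; exact Submodule.zero_mem _
  | add x y _ _ hx hy => rw [map_add]; exact Submodule.add_mem _ hx hy
  | smul r x _ hx =>
    rw [hasseDeriv_zmod_smul]
    exact Submodule.smul_mem _ _ hx

end HasseStability
end
end

section
/- For every U ⊆ Σ and every integer n with 0 ≤ n ≤ q − 1, the element (θ^q − θ)·S_1(1+n; σ_U) − (−1)^n·D_n(P_U) of F, viewed as a rational function in θ over the field 𝔽_q(t_i : i ∈ Σ), has negative degree at infinity: when written as a quotient of two polynomials in θ, its numerator has strictly smaller θ-degree than its denominator (equivalently, its expansion at θ = ∞ lies in (1/θ)·𝔽_q(t_i : i∈Σ)[[1/θ]]). -/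
/- Sum-shuffle formula for twisted power sums (Theorem 7 of Pellarin,
"A sum-shuffle formula for zeta values in Tate algebras").

Setting: `p` prime, `q = p ^ e`, `𝔽_q = GaloisField p e`, `A = 𝔽_q[θ]`,
`F` the fraction field of `𝔽_q[θ][t_i : i ∈ Σ]`. -/

set_option synthInstance.maxHeartbeats 1000000
set_option maxHeartbeats 1000000

noncomputable section

namespace TwistedPowerSums

variable (p e : ℕ) [Fact p.Prime] (σ : Type) [Fintype σ] [DecidableEq σ]

abbrev Fq : Type := GaloisField p e

instance : Fintype (Fq p e) := Fintype.ofFinite _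

/-- `𝔽_q[t_i : i ∈ Σ]`. -/
abbrev Rt : Type := MvPolynomial σ (Fq p e)

/-- `𝔽_q[θ][t_i : i ∈ Σ]`, viewed as polynomials in `θ` over `𝔽_q[t_i : i ∈ Σ]`. -/
abbrev Rθ : Type := Polynomial (Rt p e σ)

/-- `F`, the fraction field of `𝔽_q[θ][t_i : i ∈ Σ]`. -/
abbrev F : Type := FractionRing (Rθ p e σ)

/-- `σ_U(a) = ∏_{i ∈ U} a(t_i) ∈ 𝔽_q[t_i : i ∈ Σ]`. -/
def sigmaPoly (U : Finset σ) (a : Polynomial (Fq p e)) : Rt p e σ :=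
  ∏ i ∈ U, Polynomial.aeval (MvPolynomial.X i) a

/-- The image of an element of `𝔽_q[t_i : i ∈ Σ]` in `F`. -/
def tF (x : Rt p e σ) : F p e σ :=
  algebraMap (Rθ p e σ) (F p e σ) (Polynomial.C x)

/-- The image of `a ∈ A = 𝔽_q[θ]` in `F`. -/
def aF (a : Polynomial (Fq p e)) : F p e σ :=
  algebraMap (Rθ p e σ) (F p e σ) (a.map MvPolynomial.C)

/-- `A⁺(d)`, the set of monic polynomials of degree `d` in `A = 𝔽_q[θ]`. -/
def Aplus (d : ℕ) : Set (Polynomial (Fq p e)) := {a | a.Monic ∧ a.natDegree = d}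

/-- The twisted power sum `S_d(k; σ_U) = Σ_{a ∈ A⁺(d)} σ_U(a)·a^{-k} ∈ F`. -/
def S (d k : ℕ) (U : Finset σ) : F p e σ :=
  ∑ᶠ a ∈ Aplus p e d, tF p e σ (sigmaPoly p e σ U a) * (aF p e σ a)⁻¹ ^ k


/-- `[1] = θ^q - θ`, as an element of `𝔽_q[θ][t_i : i ∈ Σ]`. -/
def brack : Rθ p e σ := Polynomial.X ^ p ^ e - Polynomial.X

/-- `P_U = [1]·S_1(1; σ_U) = Σ_{λ∈𝔽_q} ((θ-λ)^{q-1} - 1)·∏_{i∈U}(t_i - λ)`, an element of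
`𝔽_q[θ][t_i : i ∈ Σ]`. -/
def P (U : Finset σ) : Rθ p e σ :=
  ∑ l : Fq p e,
    ((Polynomial.X - Polynomial.C (MvPolynomial.C l)) ^ (p ^ e - 1) - 1) *
      Polynomial.C (∏ i ∈ U, (MvPolynomial.X i - MvPolynomial.C l))

/-! ### Auxiliary lemmas -/

lemma choose_q_sub_one_cast {R : Type*} [CommRing R] {p : ℕ} (hp : p.Prime) [CharP R p]
    {e : ℕ} : ∀ n, n ≤ p ^ e - 1 → ((p ^ e - 1).choose n : R) = (-1) ^ n := by
  have hq : 1 ≤ p ^ e := Nat.one_le_pow _ _ hp.pos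
  intro n
  induction n with
  | zero => simp
  | succ n ih =>
    intro hn
    have h1 : (p ^ e).choose (n + 1) = (p ^ e - 1).choose n + (p ^ e - 1).choose (n + 1) := by
      conv_lhs => rw [← Nat.succ_pred_eq_of_pos hq]
      exact Nat.choose_succ_succ _ _
    have h2 : ((p ^ e).choose (n + 1) : R) = 0 := by
      rw [CharP.cast_eq_zero_iff R p]
      exact hp.dvd_choose_pow (Nat.succ_ne_zero n) (by omega)
    have h3 := ih (by omega)
    have h4 := congrArg (Nat.cast : ℕ → R) h1
    push_cast at h4
    rw [h2, h3] at h4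
    have h5 : ((p ^ e - 1).choose (n + 1) : R) = -(-1) ^ n := by linear_combination -h4
    rw [h5, pow_succ]; ring

open Polynomial Finset in
lemma hasseDeriv_X_add_C_pow {R : Type*} [CommRing R] [Nontrivial R] (r : R) (m n : ℕ) :
    Polynomial.hasseDeriv n ((X + C r) ^ m) =
      (m.choose n : R[X]) * (X + C r) ^ (m - n) := by
  rcases lt_or_ge m n with h | h
  · rw [Nat.choose_eq_zero_of_lt h, Nat.cast_zero, zero_mul]
    apply hasseDeriv_eq_zero_of_lt_natDegree
    calc ((X + C r) ^ m).natDegree ≤ m * (X + C r).natDegree := natDegree_pow_le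
      _ = m * 1 := by rw [natDegree_X_add_C]
      _ < n := by omega
  · have expand : ∀ M : ℕ, (X + C r) ^ M = ∑ k ∈ range (M + 1),
        monomial k ((M.choose k : R) * r ^ (M - k)) := by
      intro M
      rw [add_pow]
      refine Finset.sum_congr rfl fun k hk => ?_
      rw [← C_pow, ← C_eq_natCast, mul_assoc, ← C_mul, mul_comm,
        mul_comm (r ^ (M - k)), C_mul_X_pow_eq_monomial]
    rw [expand m, map_sum, expand (m - n), Finset.mul_sum]
    have hsub : ∑ k ∈ range (m + 1), hasseDeriv n (monomial k ((m.choose k : R) * r ^ (m - k)))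
        = ∑ k ∈ Finset.Ico n (m + 1),
            hasseDeriv n (monomial k ((m.choose k : R) * r ^ (m - k))) := by
      refine (Finset.sum_subset ?_ ?_).symm
      · intro k hk; simp only [Finset.mem_Ico] at hk; simp only [Finset.mem_range]; omega
      · intro k hk hk2
        simp only [Finset.mem_range, Finset.mem_Ico, not_and, not_le] at hk hk2
        rw [hasseDeriv_monomial, Nat.choose_eq_zero_of_lt (by omega), Nat.cast_zero, zero_mul,
          monomial_zero_right]
    rw [hsub, Finset.sum_Ico_eq_sum_range]
    have hrange : m + 1 - n = m - n + 1 := by omega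
    rw [hrange]
    refine Finset.sum_congr rfl fun j hj => ?_
    simp only [Finset.mem_range] at hj
    have key : (m.choose (n + j)) * ((n + j).choose n) = (m.choose n) * ((m - n).choose j) := by
      have := Nat.choose_mul (n := m) (k := n + j) (Nat.le_add_right n j)
      simpa using this
    have keyR : ((n + j).choose n : R) * (m.choose (n + j) : R)
        = (m.choose n : R) * ((m - n).choose j : R) := by
      rw [mul_comm]; exact_mod_cast congrArg (Nat.cast : ℕ → R) key
    rw [hasseDeriv_monomial, ← C_eq_natCast, C_mul_monomial]
    have h1 : n + j - n = j := by omega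
    have h2 : m - (n + j) = m - n - j := by omega
    rw [h1, h2, ← mul_assoc, ← mul_assoc, keyR]

open Polynomial in
lemma Aplus_one_eq : Aplus p e 1 = Set.range (fun c : Fq p e => Polynomial.X + Polynomial.C c) := by
  ext a
  constructor
  · rintro ⟨hm, hd⟩
    refine ⟨a.coeff 0, ?_⟩
    have h1 : a.degree ≤ 1 := by
      rw [degree_eq_natDegree hm.ne_zero, hd]; exact le_rfl
    have hc1 : a.coeff 1 = 1 := by
      have := hm.coeff_natDegree; rwa [hd] at this
    conv_rhs => rw [Polynomial.eq_X_add_C_of_degree_le_one h1]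
    rw [hc1, map_one, one_mul]
  · rintro ⟨c, rfl⟩
    exact ⟨Polynomial.monic_X_add_C c, Polynomial.natDegree_X_add_C c⟩

open Polynomial in
lemma S_one_eq (k : ℕ) (U : Finset σ) :
    S p e σ 1 k U = ∑ c : Fq p e,
      algebraMap (Rθ p e σ) (F p e σ)
          (Polynomial.C (∏ i ∈ U, (MvPolynomial.X i + MvPolynomial.C c))) *
        (algebraMap (Rθ p e σ) (F p e σ)
            (Polynomial.X + Polynomial.C (MvPolynomial.C c)))⁻¹ ^ k := by
  have hinj : Function.Injective (fun c : Fq p e => Polynomial.X + Polynomial.C c) := by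
    intro a b h
    simpa using congrArg (fun q => Polynomial.coeff q 0) h
  rw [S, Aplus_one_eq, finsum_mem_range hinj, finsum_eq_sum_of_fintype]
  refine Finset.sum_congr rfl fun c _ => ?_
  have h1 : sigmaPoly p e σ U (Polynomial.X + Polynomial.C c)
      = ∏ i ∈ U, (MvPolynomial.X i + MvPolynomial.C c) := by
    refine Finset.prod_congr rfl fun i _ => ?_
    simp [MvPolynomial.algebraMap_eq]
  have h2 : (Polynomial.X + Polynomial.C c).map (MvPolynomial.C : Fq p e →+* Rt p e σ)
      = Polynomial.X + Polynomial.C (MvPolynomial.C c) := by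
    simp
  rw [tF, aF, h1, h2]

open Polynomial in
lemma neg_one_pow_hasseDeriv_P (U : Finset σ) (n : ℕ) (hn : n ≤ p ^ e - 1) :
    ((-1 : Rθ p e σ) ^ n) * Polynomial.hasseDeriv n (P p e σ U)
      = ∑ c : Fq p e,
          Polynomial.C (∏ i ∈ U, (MvPolynomial.X i + MvPolynomial.C c)) *
            ((Polynomial.X + Polynomial.C (MvPolynomial.C c)) ^ (p ^ e - 1 - n)
              - (if n = 0 then 1 else 0)) := by
  have hprime : p.Prime := Fact.out
  have hchoose : (((p ^ e - 1).choose n : ℕ) : Rθ p e σ) = (-1) ^ n :=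
    choose_q_sub_one_cast hprime n hn
  have hsq : ((-1 : Rθ p e σ) ^ n) * ((-1 : Rθ p e σ) ^ n) = 1 := by
    rw [← mul_pow]; norm_num
  have hI : ((-1 : Rθ p e σ) ^ n) * (if n = 0 then (1 : Rθ p e σ) else 0)
      = (if n = 0 then 1 else 0) := by
    rcases Nat.eq_zero_or_pos n with h | h
    · subst h; simp
    · rw [if_neg h.ne', mul_zero]
  have key : ∀ (r : Rt p e σ) (D : Rt p e σ),
      ((-1 : Rθ p e σ) ^ n) * Polynomial.hasseDeriv n
        (((Polynomial.X + Polynomial.C r) ^ (p ^ e - 1) - 1) * Polynomial.C D)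
      = Polynomial.C D * ((Polynomial.X + Polynomial.C r) ^ (p ^ e - 1 - n)
          - (if n = 0 then 1 else 0)) := by
    intro r D
    have hterm : Polynomial.hasseDeriv n
        (((Polynomial.X + Polynomial.C r) ^ (p ^ e - 1) - 1) * Polynomial.C D)
        = Polynomial.C D * ((-1) ^ n * (Polynomial.X + Polynomial.C r) ^ (p ^ e - 1 - n)
            - (if n = 0 then 1 else 0)) := by
      rw [mul_comm, ← smul_eq_C_mul, map_smul, smul_eq_C_mul]
      congr 1
      rw [map_sub, hasseDeriv_X_add_C_pow, hchoose]
      congr 1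
      rcases Nat.eq_zero_or_pos n with h | h
      · subst h; rw [if_pos rfl, hasseDeriv_zero']
      · rw [if_neg h.ne', hasseDeriv_apply_one n h]
    rw [hterm]
    set A := (Polynomial.X + Polynomial.C r : Rθ p e σ) ^ (p ^ e - 1 - n)
    set I := (if n = 0 then (1 : Rθ p e σ) else 0)
    linear_combination (Polynomial.C D * A) * hsq - Polynomial.C D * hI
  rw [P, map_sum, Finset.mul_sum]
  refine Fintype.sum_equiv (Equiv.neg (Fq p e)) _ _ fun x => ?_
  have l1 : (Polynomial.X : Rθ p e σ) - Polynomial.C (MvPolynomial.C x)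
      = Polynomial.X + Polynomial.C (-(MvPolynomial.C x)) := by
    rw [Polynomial.C_neg, ← sub_eq_add_neg]
  have l2 : (Polynomial.X : Rθ p e σ)
        + Polynomial.C (MvPolynomial.C ((Equiv.neg (Fq p e)) x))
      = Polynomial.X + Polynomial.C (-(MvPolynomial.C x)) := by
    simp
  have l3 : (∏ i ∈ U, (MvPolynomial.X i + MvPolynomial.C ((Equiv.neg (Fq p e)) x)) : Rt p e σ)
      = ∏ i ∈ U, (MvPolynomial.X i - MvPolynomial.C x) := by
    refine Finset.prod_congr rfl fun i _ => ?_
    simp [sub_eq_add_neg]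
  rw [l1, l2, l3, key]

open Polynomial in
/-- **Lemma 11**: for `0 ≤ n ≤ q - 1`, the element
`(θ^q - θ)·S_1(1+n; σ_U) - (-1)^n·D_n(P_U)` of `F` has negative degree at infinity:
it can be written as a quotient `f/g` of polynomials in `θ` with `deg_θ f < deg_θ g`. -/
theorem brack_S_one_add_n_congruence (he : 1 ≤ e) (U : Finset σ) (n : ℕ)
    (hn : n ≤ p ^ e - 1) :
    ∃ f g : Rθ p e σ, g ≠ 0 ∧
      (algebraMap (Rθ p e σ) (F p e σ) (brack p e σ) * S p e σ 1 (1 + n) U -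
          (-1) ^ n * algebraMap (Rθ p e σ) (F p e σ) (Polynomial.hasseDeriv n (P p e σ U))) *
        algebraMap (Rθ p e σ) (F p e σ) g = algebraMap (Rθ p e σ) (F p e σ) f ∧
      f.degree < g.degree := by
  classical
  have hprime : p.Prime := Fact.out
  have hq1 : 1 < p ^ e := Nat.one_lt_pow (by omega) hprime.one_lt
  have hcard : Fintype.card (Fq p e) = p ^ e := by
    rw [← Nat.card_eq_fintype_card]; exact GaloisField.card p e (by omega)
  set φ := algebraMap (Rθ p e σ) (F p e σ) with hφdef
  have hφ : Function.Injective φ := IsFractionRing.injective _ _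
  set v : Fq p e → Rθ p e σ := fun c => Polynomial.X + Polynomial.C (MvPolynomial.C c) with hv
  set d : Fq p e → Rt p e σ := fun c => ∏ i ∈ U, (MvPolynomial.X i + MvPolynomial.C c) with hdd
  have hvm : ∀ c, (v c).Monic := fun c => monic_X_add_C _
  have hv0 : ∀ c, φ (v c) ≠ 0 := by
    intro c
    simp only [map_ne_zero_iff φ hφ]
    exact (hvm c).ne_zero
  -- brack = v c ^ q - v c
  have hbrack : ∀ c, brack p e σ = v c ^ p ^ e - v c := by
    intro c
    have hfrob : (Polynomial.X + Polynomial.C (MvPolynomial.C c) : Rθ p e σ) ^ p ^ e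
        = Polynomial.X ^ p ^ e + (Polynomial.C (MvPolynomial.C c)) ^ p ^ e :=
      add_pow_char_pow _ _ p e
    have hcq : c ^ p ^ e = c := by rw [← hcard]; exact FiniteField.pow_card c
    have hCq : (Polynomial.C (MvPolynomial.C c) : Rθ p e σ) ^ p ^ e
        = Polynomial.C (MvPolynomial.C c) := by
      rw [← map_pow, ← map_pow, hcq]
    rw [brack]
    simp only [hv]
    rw [hfrob, hCq]
    ring
  -- key per-term field computation
  have hkey : ∀ c : Fq p e, φ (brack p e σ) * (φ (v c))⁻¹ ^ (1 + n)
      = φ (v c) ^ (p ^ e - 1 - n) - ((φ (v c))⁻¹) ^ n := by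
    intro c
    rw [hbrack c, map_sub, map_pow]
    set u := φ (v c) with hu
    have hu0 : u ≠ 0 := hv0 c
    have e1 : u ^ p ^ e = u ^ (p ^ e - 1 - n) * u ^ (1 + n) := by
      rw [← pow_add]; congr 1; omega
    have e3 : u * (u ^ (1 + n))⁻¹ = (u⁻¹) ^ n := by
      rw [inv_pow, pow_add, pow_one, mul_inv, ← mul_assoc, mul_inv_cancel₀ hu0, one_mul]
    rw [inv_pow, sub_mul, e1, mul_assoc, mul_inv_cancel₀ (pow_ne_zero _ hu0), mul_one, e3]
  -- the sum form of the LHS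
  have hS : φ (brack p e σ) * S p e σ 1 (1 + n) U
      = ∑ c : Fq p e, φ (Polynomial.C (d c)) *
          (φ (v c) ^ (p ^ e - 1 - n) - ((φ (v c))⁻¹) ^ n) := by
    rw [S_one_eq, Finset.mul_sum]
    refine Finset.sum_congr rfl fun c _ => ?_
    rw [← mul_assoc, mul_comm (φ (brack p e σ)), mul_assoc, hkey c]
  -- the sum form of the hasseDeriv part
  have hPF : ((-1 : F p e σ) ^ n) * φ (Polynomial.hasseDeriv n (P p e σ U))
      = ∑ c : Fq p e, φ (Polynomial.C (d c)) *
          (φ (v c) ^ (p ^ e - 1 - n) - (if n = 0 then 1 else 0)) := by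
    have h := congrArg φ (neg_one_pow_hasseDeriv_P p e σ U n hn)
    rw [map_mul, map_pow, map_neg, map_one, map_sum] at h
    rw [h]
    refine Finset.sum_congr rfl fun c _ => ?_
    rw [map_mul, map_sub, map_pow, apply_ite φ, map_one, map_zero]
  -- the difference
  have hdiff : φ (brack p e σ) * S p e σ 1 (1 + n) U -
      (-1) ^ n * φ (Polynomial.hasseDeriv n (P p e σ U))
      = ∑ c : Fq p e, φ (Polynomial.C (d c)) *
          ((if n = 0 then 1 else 0) - ((φ (v c))⁻¹) ^ n) := by
    rw [hS, hPF, ← Finset.sum_sub_distrib]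
    refine Finset.sum_congr rfl fun c _ => ?_
    ring
  rcases Nat.eq_zero_or_pos n with hn0 | hn1
  · subst hn0
    refine ⟨0, 1, one_ne_zero, ?_, ?_⟩
    · rw [hdiff]
      simp
    · rw [degree_one, degree_zero]
      exact WithBot.bot_lt_coe 0
  · -- n ≥ 1
    refine ⟨-(∑ c : Fq p e, Polynomial.C (d c) *
        ∏ c' ∈ Finset.univ.erase c, (v c') ^ n),
      ∏ c' : Fq p e, (v c') ^ n, ?_, ?_, ?_⟩
    · exact (monic_prod_of_monic _ _ fun c _ => (hvm c).pow n).ne_zero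
    · rw [hdiff]
      simp only [if_neg hn1.ne']
      rw [map_neg, map_sum, Finset.sum_mul, ← Finset.sum_neg_distrib]
      refine Finset.sum_congr rfl fun c _ => ?_
      simp only [map_mul, map_prod, map_pow]
      have hrest : ((φ (v c))⁻¹) ^ n *
          (φ (v c) ^ n * ∏ c' ∈ Finset.univ.erase c, φ (v c') ^ n)
          = ∏ c' ∈ Finset.univ.erase c, φ (v c') ^ n := by
        rw [inv_pow, ← mul_assoc, inv_mul_cancel₀ (pow_ne_zero _ (hv0 c)), one_mul]
      rw [← Finset.mul_prod_erase Finset.univ (fun x => φ (v x) ^ n) (Finset.mem_univ c)]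
      linear_combination (-(φ (Polynomial.C (d c)))) * hrest
    · have hgmonic : (∏ c' : Fq p e, v c' ^ n).Monic :=
        monic_prod_of_monic _ _ fun c _ => (hvm c).pow n
      have hvdeg : ∀ c' : Fq p e, (v c' ^ n).natDegree = n := by
        intro c'
        rw [natDegree_pow]
        simp only [hv]
        rw [natDegree_X_add_C, mul_one]
      have hgdeg : (∏ c' : Fq p e, v c' ^ n).natDegree = p ^ e * n := by
        rw [natDegree_prod _ _ fun c _ => ((hvm c).pow n).ne_zero]
        rw [Finset.sum_congr rfl fun c _ => hvdeg c, Finset.sum_const, Finset.card_univ, hcard, smul_eq_mul]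
      have hfdeg : (-(∑ c : Fq p e, Polynomial.C (d c) *
          ∏ c' ∈ Finset.univ.erase c, (v c') ^ n)).degree ≤ (((p ^ e - 1) * n : ℕ) : WithBot ℕ) := by
        rw [degree_neg]
        refine (Polynomial.degree_sum_le _ _).trans ?_
        refine Finset.sup_le fun c _ => ?_
        refine (Polynomial.degree_mul_le _ _).trans ?_
        have h1 : (Polynomial.C (d c)).degree ≤ 0 := degree_C_le
        have h2 : (∏ c' ∈ Finset.univ.erase c, (v c') ^ n).degree
            ≤ (((p ^ e - 1) * n : ℕ) : WithBot ℕ) := by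
          refine (Polynomial.degree_le_natDegree).trans ?_
          have : (∏ c' ∈ Finset.univ.erase c, (v c') ^ n).natDegree ≤ (p ^ e - 1) * n := by
            refine (Polynomial.natDegree_prod_le _ _).trans ?_
            rw [Finset.sum_congr rfl fun c' _ => hvdeg c', Finset.sum_const, smul_eq_mul]
            have : (Finset.univ.erase c).card = p ^ e - 1 := by
              rw [Finset.card_erase_of_mem (Finset.mem_univ c), Finset.card_univ, hcard]
            rw [this]
          exact_mod_cast this
        calc (Polynomial.C (d c)).degree
              + (∏ c' ∈ Finset.univ.erase c, (v c') ^ n).degree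
            ≤ 0 + (((p ^ e - 1) * n : ℕ) : WithBot ℕ) := add_le_add h1 h2
          _ = (((p ^ e - 1) * n : ℕ) : WithBot ℕ) := zero_add _
      refine lt_of_le_of_lt hfdeg ?_
      rw [degree_eq_natDegree hgmonic.ne_zero, hgdeg]
      exact_mod_cast Nat.mul_lt_mul_of_lt_of_le (by omega) le_rfl (by omega)

end TwistedPowerSums
end
end

section
/- Let U and V be disjoint subsets of Σ with U ⊔ V = Σ. Then there exist elements f_J ∈ 𝔽_p, one for each subset J ⊆ Σ with |J| ≡ 1 (mod q−1), such that S_1(1; σ_U)·S_1(1; σ_V) − S_1(2; σ_Σ) = Σ_J f_J·S_1(1; σ_{Σ∖J}) in F, the sum being over all subsets J ⊆ Σ with |J| ≡ 1 (mod q−1). -/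
/- Sum-shuffle formula for twisted power sums (Theorem 7 of Pellarin,
"A sum-shuffle formula for zeta values in Tate algebras").

Setting: `p` prime, `q = p ^ e`, `𝔽_q = GaloisField p e`, `A = 𝔽_q[θ]`,
`F` the fraction field of `𝔽_q[θ][t_i : i ∈ Σ]`. -/

set_option synthInstance.maxHeartbeats 1000000
set_option maxHeartbeats 1000000
set_option linter.unusedSectionVars false

noncomputable section

namespace TwistedPowerSums

variable (p e : ℕ) [Fact p.Prime] (σ : Type) [Fintype σ] [DecidableEq σ]

-- ring homs
def AF : Polynomial (Fq p e) →+* F p e σ :=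
  (algebraMap (Rθ p e σ) (F p e σ)).comp (Polynomial.mapRingHom MvPolynomial.C)

def TF : Rt p e σ →+* F p e σ :=
  (algebraMap (Rθ p e σ) (F p e σ)).comp (Polynomial.C)

def iF : Fq p e →+* F p e σ := (TF p e σ).comp MvPolynomial.C

lemma aF_eq (a : Polynomial (Fq p e)) : aF p e σ a = AF p e σ a := rfl
lemma tF_eq (x : Rt p e σ) : tF p e σ x = TF p e σ x := rfl

lemma AF_injective : Function.Injective (AF p e σ) := by
  apply Function.Injective.comp (g := algebraMap (Rθ p e σ) (F p e σ))
  · exact IsFractionRing.injective _ _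
  · exact Polynomial.map_injective _ (MvPolynomial.C_injective _ _)

lemma AF_C (c : Fq p e) : AF p e σ (Polynomial.C c) = iF p e σ c := by
  simp [AF, iF, TF]

def xc (c : Fq p e) : F p e σ := AF p e σ (Polynomial.X + Polynomial.C c)

lemma xc_ne_zero (c : Fq p e) : xc p e σ c ≠ 0 := by
  intro h
  have := AF_injective p e σ (h.trans (map_zero (AF p e σ)).symm)
  exact (Polynomial.monic_X_add_C c).ne_zero this

lemma iF_ne_zero {c : Fq p e} (hc : c ≠ 0) : iF p e σ c ≠ 0 :=
  fun h => hc ((iF p e σ).injective (h.trans (map_zero _).symm))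

lemma xc_sub (c d : Fq p e) : xc p e σ c - xc p e σ d = iF p e σ (c - d) := by
  rw [← AF_C]
  simp only [xc, ← map_sub]
  congr 1
  rw [map_sub]
  ring

-- partial fractions
lemma partial_frac {c d : Fq p e} (h : c ≠ d) :
    (xc p e σ c)⁻¹ * (xc p e σ d)⁻¹ =
      (iF p e σ (c - d))⁻¹ * ((xc p e σ d)⁻¹ - (xc p e σ c)⁻¹) := by
  have hc := xc_ne_zero p e σ c
  have hd := xc_ne_zero p e σ d
  have hw : iF p e σ (c - d) ≠ 0 := iF_ne_zero p e σ (sub_ne_zero.mpr h)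
  rw [← xc_sub] at hw ⊢
  field_simp

lemma nat_dvd_mod_iff (m n : ℕ) (hm : 1 ≤ m) : m ∣ (n + m - 1) ↔ n % m = 1 % m := by
  have h1 : n + m - 1 = n + (m - 1) := by omega
  rw [h1]
  constructor
  · intro h
    have h2 : n + (m - 1) ≡ 0 [MOD m] := (Nat.modEq_zero_iff_dvd).mpr h
    have h3 : (0 : ℕ) ≡ 1 + (m - 1) [MOD m] := by
      have : 1 + (m - 1) = m := by omega
      rw [this]
      exact (Nat.modEq_zero_iff_dvd.mpr dvd_rfl).symm
    have h4 : n + (m - 1) ≡ 1 + (m - 1) [MOD m] := h2.trans h3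
    exact Nat.ModEq.add_right_cancel' _ h4
  · intro h
    have h2 : n + (m - 1) ≡ 1 + (m - 1) [MOD m] := Nat.ModEq.add_right (m - 1) h
    have h3 : 1 + (m - 1) = m := by omega
    rw [h3] at h2
    have h4 : n + (m - 1) ≡ 0 [MOD m] := h2.trans (Nat.modEq_zero_iff_dvd.mpr dvd_rfl)
    exact Nat.modEq_zero_iff_dvd.mp h4

lemma charSum {K L : Type*} [Field K] [Fintype K] [DecidableEq K] [Field L] (ι : K →+* L)
    (n : ℕ) (hq : 2 ≤ Fintype.card K) :
    ∑ δ ∈ Finset.univ \ {(0 : K)}, (ι δ) ^ n * (ι δ)⁻¹ =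
      if n % (Fintype.card K - 1) = 1 % (Fintype.card K - 1) then (-1 : L) else 0 := by
  set q := Fintype.card K with hqdef
  have hstep : ∀ δ ∈ Finset.univ \ {(0 : K)},
      (ι δ) ^ n * (ι δ)⁻¹ = ι (δ ^ (n + q - 2)) := by
    intro δ hδ
    have hδ0 : δ ≠ 0 := by simpa using (Finset.mem_sdiff.mp hδ).2
    have h1 : δ ^ (q - 1) = 1 := FiniteField.pow_card_sub_one_eq_one δ hδ0
    have hinv : δ⁻¹ = δ ^ (q - 2) := by
      have : δ ^ (q - 2) * δ = 1 := by
        rw [← pow_succ]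
        have : q - 2 + 1 = q - 1 := by omega
        rw [this, h1]
      exact (eq_inv_of_mul_eq_one_left this).symm
    rw [← map_inv₀, hinv, ← map_pow, ← map_mul, ← pow_add]
    congr 2
    omega
  rw [Finset.sum_congr rfl hstep, ← map_sum]
  have himg : (Finset.univ \ {(0 : K)}) = Finset.univ.image (fun u : Kˣ => (u : K)) := by
    ext a
    simp only [Finset.mem_sdiff, Finset.mem_univ, true_and, Finset.mem_singleton,
      Finset.mem_image]
    constructor
    · intro ha
      exact ⟨Units.mk0 a ha, rfl⟩
    · rintro ⟨u, rfl⟩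
      exact u.ne_zero
  rw [himg, Finset.sum_image (fun a _ b _ h => Units.ext h)]
  have : ∑ u : Kˣ, ((u : K) ^ (n + q - 2)) = if q - 1 ∣ (n + q - 2) then (-1 : K) else 0 := by
    simpa using FiniteField.sum_pow_units K (n + q - 2)
  rw [this]
  have hdvd : (q - 1 ∣ (n + q - 2)) ↔ n % (q - 1) = 1 % (q - 1) := by
    have h2 : n + q - 2 = n + (q - 1) - 1 := by omega
    rw [h2]
    exact nat_dvd_mod_iff (q - 1) n (by omega)
  by_cases hc : q - 1 ∣ n + q - 2
  · rw [if_pos hc, if_pos (hdvd.mp hc)]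
    simp
  · rw [if_neg hc, if_neg (fun h => hc (hdvd.mpr h))]
    simp


def sP (W : Finset σ) (c : Fq p e) : F p e σ :=
  TF p e σ (∏ i ∈ W, (MvPolynomial.X i + MvPolynomial.C c))

lemma tF_sigma (W : Finset σ) (c : Fq p e) :
    tF p e σ (sigmaPoly p e σ W (Polynomial.X + Polynomial.C c)) = sP p e σ W c := by
  rw [tF_eq, sP]
  congr 1
  unfold sigmaPoly
  apply Finset.prod_congr rfl
  intro i _
  simp [MvPolynomial.algebraMap_eq]

lemma sP_union {U V : Finset σ} (h : Disjoint U V) (c : Fq p e) :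
    sP p e σ (U ∪ V) c = sP p e σ U c * sP p e σ V c := by
  rw [sP, Finset.prod_union h, map_mul]
  rfl

lemma iF_eq_TF (c : Fq p e) : iF p e σ c = TF p e σ (MvPolynomial.C c) := rfl

lemma sP_expand (W : Finset σ) (γ δ : Fq p e) :
    sP p e σ W (γ + δ) =
      ∑ T ∈ W.powerset, sP p e σ T γ * (iF p e σ δ) ^ (W.card - T.card) := by
  rw [sP]
  have h1 : ∀ i ∈ W, MvPolynomial.X i + MvPolynomial.C (γ + δ) =
      (MvPolynomial.X i + MvPolynomial.C γ) + MvPolynomial.C δ (σ := σ) := by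
    intro i _
    rw [map_add]
    ring
  rw [Finset.prod_congr rfl h1, Finset.prod_add, map_sum]
  apply Finset.sum_congr rfl
  intro T hT
  rw [Finset.prod_const, map_mul, map_pow, sP, iF_eq_TF,
    Finset.card_sdiff_of_subset (Finset.mem_powerset.mp hT)]

lemma S_one (k : ℕ) (W : Finset σ) [Fintype (Fq p e)] :
    S p e σ 1 k W = ∑ c : Fq p e, sP p e σ W c * ((xc p e σ c)⁻¹) ^ k := by
  classical
  have hAplus : Aplus p e 1 =
      ↑(Finset.univ.image (fun c : Fq p e => Polynomial.X + Polynomial.C c)) := by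
    ext a
    simp only [Aplus, Set.mem_setOf_eq, Finset.coe_image, Finset.coe_univ, Set.image_univ,
      Set.mem_range]
    constructor
    · rintro ⟨hm, hd⟩
      refine ⟨a.coeff 0, ?_⟩
      have hle : a.natDegree ≤ 1 := hd.le
      have := Polynomial.eq_X_add_C_of_natDegree_le_one hle
      have hc1 : a.coeff 1 = 1 := by
        have := hm.coeff_natDegree
        rwa [hd] at this
      rw [hc1, map_one, one_mul] at this
      exact this.symm
    · rintro ⟨c, rfl⟩
      exact ⟨Polynomial.monic_X_add_C c, Polynomial.natDegree_X_add_C c⟩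
  rw [S, hAplus, finsum_mem_coe_finset,
    Finset.sum_image (fun a _ b _ h => by
      have := congrArg (fun q => Polynomial.coeff q 0) h
      simpa using this)]
  apply Finset.sum_congr rfl
  intro c _
  rw [tF_sigma, aF_eq]
  rfl


lemma card_Fq [Fintype (Fq p e)] (he : 1 ≤ e) : Fintype.card (Fq p e) = p ^ e := by
  have := GaloisField.card p e (by omega)
  rwa [Nat.card_eq_fintype_card] at this

lemma inner_sum [Fintype (Fq p e)] [DecidableEq (Fq p e)] (he : 1 ≤ e) (W : Finset σ) (γ : Fq p e) :
    ∑ c ∈ Finset.univ \ {γ}, sP p e σ W c * (iF p e σ (c - γ))⁻¹ =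
      -∑ J ∈ W.powerset.filter (fun J => J.card % (p ^ e - 1) = 1 % (p ^ e - 1)),
        sP p e σ (W \ J) γ := by
  classical
  have hcard : Fintype.card (Fq p e) = p ^ e := card_Fq p e he
  have hq2 : 2 ≤ Fintype.card (Fq p e) := by
    rw [hcard]
    exact Nat.one_lt_pow (by omega) (Fact.out (p := p.Prime)).two_le
  have himg : (Finset.univ \ {γ}) =
      (Finset.univ \ {(0 : Fq p e)}).image (fun δ => γ + δ) := by
    ext a
    simp only [Finset.mem_sdiff, Finset.mem_univ, true_and, Finset.mem_singleton,
      Finset.mem_image]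
    constructor
    · intro ha
      exact ⟨a - γ, sub_ne_zero.mpr ha, by ring⟩
    · rintro ⟨δ, hδ, rfl⟩
      intro h
      apply hδ
      have : γ + δ - γ = γ - γ := by rw [h]
      simpa using this
  rw [himg, Finset.sum_image (fun a _ b _ h => by
    have : γ + a - γ = γ + b - γ := by rw [h]
    simpa using this)]
  have hterm : ∀ δ ∈ Finset.univ \ {(0 : Fq p e)},
      sP p e σ W (γ + δ) * (iF p e σ (γ + δ - γ))⁻¹ =
        ∑ T ∈ W.powerset, sP p e σ T γ *
          ((iF p e σ δ) ^ (W.card - T.card) * (iF p e σ δ)⁻¹) := by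
    intro δ _
    rw [add_sub_cancel_left, sP_expand, Finset.sum_mul]
    exact Finset.sum_congr rfl (fun T _ => by ring)
  rw [Finset.sum_congr rfl hterm, Finset.sum_comm]
  have hTsum : ∀ T ∈ W.powerset,
      ∑ δ ∈ Finset.univ \ {(0 : Fq p e)},
        sP p e σ T γ * ((iF p e σ δ) ^ (W.card - T.card) * (iF p e σ δ)⁻¹) =
      sP p e σ T γ *
        (if (W.card - T.card) % (p ^ e - 1) = 1 % (p ^ e - 1) then (-1 : F p e σ) else 0) := by
    intro T _
    rw [← Finset.mul_sum, charSum (iF p e σ) (W.card - T.card) hq2, hcard]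
  rw [Finset.sum_congr rfl hTsum]
  have hsplit : ∑ T ∈ W.powerset, sP p e σ T γ *
      (if (W.card - T.card) % (p ^ e - 1) = 1 % (p ^ e - 1) then (-1 : F p e σ) else 0) =
      ∑ T ∈ W.powerset.filter
        (fun T => (W.card - T.card) % (p ^ e - 1) = 1 % (p ^ e - 1)), -sP p e σ T γ := by
    rw [Finset.sum_filter]
    apply Finset.sum_congr rfl
    intro T _
    split <;> ring
  rw [hsplit, ← Finset.sum_neg_distrib]
  apply Finset.sum_nbij' (i := fun T => W \ T) (j := fun J => W \ J)
  · intro T hT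
    simp only [Finset.mem_filter, Finset.mem_powerset] at hT ⊢
    exact ⟨Finset.sdiff_subset, by rw [Finset.card_sdiff_of_subset (hT.1)]; exact hT.2⟩
  · intro J hJ
    simp only [Finset.mem_filter, Finset.mem_powerset] at hJ ⊢
    refine ⟨Finset.sdiff_subset, ?_⟩
    have hc : J.card ≤ W.card := Finset.card_le_card hJ.1
    rw [Finset.card_sdiff_of_subset hJ.1]
    have hcc : W.card - (W.card - J.card) = J.card := by omega
    rw [hcc]
    exact hJ.2
  · intro T hT
    simp only [Finset.mem_filter, Finset.mem_powerset] at hT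
    exact Finset.sdiff_sdiff_eq_self hT.1
  · intro J hJ
    simp only [Finset.mem_filter, Finset.mem_powerset] at hJ
    exact Finset.sdiff_sdiff_eq_self hJ.1
  · intro T hT
    simp only [Finset.mem_filter, Finset.mem_powerset] at hT
    rw [Finset.sdiff_sdiff_eq_self hT.1]


lemma sP_split (U V : Finset σ) (hdisj : Disjoint U V) (hUV : U ∪ V = Finset.univ)
    {J : Finset σ} (hJ : J ⊆ U) (γ : Fq p e) :
    sP p e σ (Finset.univ \ J) γ = sP p e σ (U \ J) γ * sP p e σ V γ := by
  have hset : Finset.univ \ J = (U \ J) ∪ V := by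
    rw [← hUV]
    ext i
    simp only [Finset.mem_sdiff, Finset.mem_union]
    constructor
    · rintro ⟨hi | hi, hni⟩
      · exact Or.inl ⟨hi, hni⟩
      · exact Or.inr hi
    · rintro (⟨hi, hni⟩ | hi)
      · exact ⟨Or.inl hi, hni⟩
      · refine ⟨Or.inr hi, fun hiJ => ?_⟩
        exact (Finset.disjoint_left.mp hdisj) (hJ hiJ) hi
  rw [hset, sP_union p e σ (hdisj.mono_left Finset.sdiff_subset) γ]

/-- **Proposition 12**: existence of coefficients `f_J ∈ 𝔽_p` such that
`S_1(1; σ_U)·S_1(1; σ_V) - S_1(2; σ_Σ) = Σ_J f_J · S_1(1; σ_{Σ∖J})`, the sum being over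
the subsets `J ⊆ Σ` with `|J| ≡ 1 (mod q-1)`.  An element `f ∈ 𝔽_p = ZMod p` acts on `F`
through its canonical representative `f.val ∈ {0, …, p-1}` (the canonical `𝔽_p`-structure
of the characteristic-`p` field `F`). -/
theorem powerSum_degree_one_coeffs (he : 1 ≤ e) (U V : Finset σ) (hdisj : Disjoint U V)
    (hUV : U ∪ V = Finset.univ) :
    ∃ f : Finset σ → ZMod p,
      S p e σ 1 1 U * S p e σ 1 1 V - S p e σ 1 2 Finset.univ =
        ∑ J ∈ Finset.univ.powerset.filter
            (fun J : Finset σ => J.card % (p ^ e - 1) = 1 % (p ^ e - 1)),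
          ((f J).val : F p e σ) * S p e σ 1 1 (Finset.univ \ J) := by
  classical
  haveI : Fintype (Fq p e) := Fintype.ofFinite _
  haveI : NeZero p := ⟨(Fact.out (p := p.Prime)).ne_zero⟩
  haveI : CharP (F p e σ) p := charP_of_injective_ringHom (RingHom.injective (iF p e σ)) p
  refine ⟨fun J => (if J ⊆ U then (-1 : ZMod p) else 0) + (if J ⊆ V then -1 else 0), ?_⟩
  set cond : Finset σ → Prop := fun J => J.card % (p ^ e - 1) = 1 % (p ^ e - 1) with hcond
  have hcast : ∀ J : Finset σ,
      ((((if J ⊆ U then (-1 : ZMod p) else 0) + (if J ⊆ V then -1 else 0)).val : ℕ) : F p e σ)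
        = (if J ⊆ U then (-1 : F p e σ) else 0) + (if J ⊆ V then -1 else 0) := by
    intro J
    have h1 : ∀ a : ZMod p, ((a.val : ℕ) : F p e σ) = ZMod.castHom (dvd_refl p) (F p e σ) a := by
      intro a
      rw [ZMod.castHom_apply, ZMod.natCast_val]
    rw [h1, map_add]
    congr 1 <;> split <;>
      simp [ZMod.cast_neg (dvd_refl p), ZMod.cast_one (dvd_refl p), ZMod.cast_zero]
  -- rewrite all S's as finite sums
  rw [S_one p e σ 1 U, S_one p e σ 1 V, S_one p e σ 2 Finset.univ]
  -- the left-hand side as an off-diagonal double sum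
  have hLHS :
      (∑ c : Fq p e, sP p e σ U c * ((xc p e σ c)⁻¹) ^ 1) *
        (∑ d : Fq p e, sP p e σ V d * ((xc p e σ d)⁻¹) ^ 1) -
        ∑ c : Fq p e, sP p e σ Finset.univ c * ((xc p e σ c)⁻¹) ^ 2 =
      ∑ c : Fq p e, ∑ d ∈ Finset.univ \ {c},
        sP p e σ U c * sP p e σ V d * ((xc p e σ c)⁻¹ * (xc p e σ d)⁻¹) := by
    rw [Finset.sum_mul_sum]
    have hsplit : ∀ c : Fq p e,
        ∑ d : Fq p e, (sP p e σ U c * ((xc p e σ c)⁻¹) ^ 1) *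
            (sP p e σ V d * ((xc p e σ d)⁻¹) ^ 1) =
          (∑ d ∈ Finset.univ \ {c},
            sP p e σ U c * sP p e σ V d * ((xc p e σ c)⁻¹ * (xc p e σ d)⁻¹)) +
          sP p e σ Finset.univ c * ((xc p e σ c)⁻¹) ^ 2 := by
      intro c
      rw [Finset.sum_eq_sum_sdiff_singleton_add (Finset.mem_univ c)]
      congr 1
      · exact Finset.sum_congr rfl (fun d _ => by ring)
      · rw [← hUV, sP_union p e σ hdisj]
        ring
    rw [Finset.sum_congr rfl (fun c _ => hsplit c), Finset.sum_add_distrib]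
    ring
  rw [hLHS]
  -- partial fractions
  have hpf : ∀ c : Fq p e, ∀ d ∈ Finset.univ \ {c},
      sP p e σ U c * sP p e σ V d * ((xc p e σ c)⁻¹ * (xc p e σ d)⁻¹) =
        sP p e σ U c * ((iF p e σ (c - d))⁻¹ * sP p e σ V d) * (xc p e σ d)⁻¹ -
        (iF p e σ (c - d))⁻¹ * sP p e σ V d * (sP p e σ U c * (xc p e σ c)⁻¹) := by
    intro c d hd
    have hne : c ≠ d := by
      intro h
      have := (Finset.mem_sdiff.mp hd).2
      simp [h] at this
    rw [partial_frac p e σ hne]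
    ring
  rw [Finset.sum_congr rfl (fun c _ => Finset.sum_congr rfl (hpf c))]
  simp only [Finset.sum_sub_distrib]
  -- Sum A: poles at d
  have hA : (∑ c : Fq p e, ∑ d ∈ Finset.univ \ {c},
        sP p e σ U c * ((iF p e σ (c - d))⁻¹ * sP p e σ V d) * (xc p e σ d)⁻¹) =
      ∑ γ : Fq p e, (sP p e σ V γ * (xc p e σ γ)⁻¹) *
        (-(∑ J ∈ U.powerset.filter cond, sP p e σ (U \ J) γ)) := by
    rw [Finset.sum_comm' (t' := Finset.univ) (s' := fun d => Finset.univ \ {d})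
      (by intro c d; simp only [Finset.mem_univ, Finset.mem_sdiff, Finset.mem_singleton,
            true_and, and_true]; exact ⟨fun h => fun hh => h (hh ▸ rfl), fun h hh => h (hh ▸ rfl)⟩)]
    apply Finset.sum_congr rfl
    intro γ _
    rw [← inner_sum p e σ he U γ, Finset.mul_sum]
    apply Finset.sum_congr rfl
    intro c _
    ring
  -- Sum B: poles at c
  have hB : (∑ c : Fq p e, ∑ d ∈ Finset.univ \ {c},
        (iF p e σ (c - d))⁻¹ * sP p e σ V d * (sP p e σ U c * (xc p e σ c)⁻¹)) =
      ∑ γ : Fq p e, (sP p e σ U γ * (xc p e σ γ)⁻¹) *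
        (∑ J ∈ V.powerset.filter cond, sP p e σ (V \ J) γ) := by
    apply Finset.sum_congr rfl
    intro γ _
    have hflip : ∀ d ∈ Finset.univ \ {γ},
        (iF p e σ (γ - d))⁻¹ * sP p e σ V d * (sP p e σ U γ * (xc p e σ γ)⁻¹) =
        (sP p e σ U γ * (xc p e σ γ)⁻¹) * -(sP p e σ V d * (iF p e σ (d - γ))⁻¹) := by
      intro d _
      have h1 : iF p e σ (γ - d) = -iF p e σ (d - γ) := by
        rw [← map_neg]
        congr 1
        ring
      rw [h1, inv_neg]
      ring
    rw [Finset.sum_congr rfl hflip, ← Finset.mul_sum, Finset.sum_neg_distrib,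
      inner_sum p e σ he V γ, neg_neg]
  rw [hA, hB]
  -- Right-hand side
  have hRHS : ∀ J ∈ Finset.univ.powerset.filter cond,
      ((((if J ⊆ U then (-1 : ZMod p) else 0) + (if J ⊆ V then -1 else 0)).val : ℕ) : F p e σ)
          * S p e σ 1 1 (Finset.univ \ J) =
      ((if J ⊆ U then (-1 : F p e σ) else 0) + (if J ⊆ V then -1 else 0)) *
        ∑ γ : Fq p e, sP p e σ (Finset.univ \ J) γ * (xc p e σ γ)⁻¹ := by
    intro J _
    rw [hcast J, S_one p e σ 1 (Finset.univ \ J)]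
    simp [pow_one]
  rw [Finset.sum_congr rfl hRHS]
  have hUV' : V ∪ U = Finset.univ := by rw [Finset.union_comm]; exact hUV
  have hfiltU : (Finset.univ.powerset.filter cond).filter (fun J => J ⊆ U) =
      U.powerset.filter cond := by
    ext J
    simp only [Finset.mem_filter, Finset.mem_powerset]
    constructor
    · rintro ⟨⟨-, h2⟩, h3⟩
      exact ⟨h3, h2⟩
    · rintro ⟨h1, h2⟩
      exact ⟨⟨Finset.subset_univ J, h2⟩, h1⟩
  have hfiltV : (Finset.univ.powerset.filter cond).filter (fun J => J ⊆ V) =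
      V.powerset.filter cond := by
    ext J
    simp only [Finset.mem_filter, Finset.mem_powerset]
    constructor
    · rintro ⟨⟨-, h2⟩, h3⟩
      exact ⟨h3, h2⟩
    · rintro ⟨h1, h2⟩
      exact ⟨⟨Finset.subset_univ J, h2⟩, h1⟩
  have hkey : ∀ γ : Fq p e,
      sP p e σ V γ * (xc p e σ γ)⁻¹ * (-(∑ J ∈ U.powerset.filter cond, sP p e σ (U \ J) γ)) -
        sP p e σ U γ * (xc p e σ γ)⁻¹ * (∑ J ∈ V.powerset.filter cond, sP p e σ (V \ J) γ) =
      ∑ J ∈ Finset.univ.powerset.filter cond,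
        ((if J ⊆ U then (-1 : F p e σ) else 0) + (if J ⊆ V then -1 else 0)) *
          (sP p e σ (Finset.univ \ J) γ * (xc p e σ γ)⁻¹) := by
    intro γ
    have hsplit2 : ∀ J ∈ Finset.univ.powerset.filter cond,
        ((if J ⊆ U then (-1 : F p e σ) else 0) + (if J ⊆ V then -1 else 0)) *
            (sP p e σ (Finset.univ \ J) γ * (xc p e σ γ)⁻¹) =
        (if J ⊆ U then -(sP p e σ (Finset.univ \ J) γ * (xc p e σ γ)⁻¹) else 0) +
        (if J ⊆ V then -(sP p e σ (Finset.univ \ J) γ * (xc p e σ γ)⁻¹) else 0) := by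
      intro J _
      split <;> split <;> ring
    rw [Finset.sum_congr rfl hsplit2, Finset.sum_add_distrib, ← Finset.sum_filter,
      ← Finset.sum_filter, hfiltU, hfiltV]
    have hU2 : ∑ J ∈ U.powerset.filter cond,
        -(sP p e σ (Finset.univ \ J) γ * (xc p e σ γ)⁻¹) =
        sP p e σ V γ * (xc p e σ γ)⁻¹ *
          (-(∑ J ∈ U.powerset.filter cond, sP p e σ (U \ J) γ)) := by
      rw [mul_neg, Finset.sum_neg_distrib]
      congr 1
      rw [Finset.mul_sum]
      apply Finset.sum_congr rfl
      intro J hJ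
      have hJU : J ⊆ U := Finset.mem_powerset.mp (Finset.mem_filter.mp hJ).1
      rw [sP_split p e σ U V hdisj hUV hJU γ]
      ring
    have hV2 : ∑ J ∈ V.powerset.filter cond,
        -(sP p e σ (Finset.univ \ J) γ * (xc p e σ γ)⁻¹) =
        -(sP p e σ U γ * (xc p e σ γ)⁻¹ *
          (∑ J ∈ V.powerset.filter cond, sP p e σ (V \ J) γ)) := by
      rw [Finset.sum_neg_distrib]
      congr 1
      rw [Finset.mul_sum]
      apply Finset.sum_congr rfl
      intro J hJ
      have hJV : J ⊆ V := Finset.mem_powerset.mp (Finset.mem_filter.mp hJ).1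
      rw [sP_split p e σ V U hdisj.symm hUV' hJV γ]
      ring
    rw [hU2, hV2]
    ring
  have hswap : ∑ J ∈ Finset.univ.powerset.filter cond,
      ((if J ⊆ U then (-1 : F p e σ) else 0) + (if J ⊆ V then -1 else 0)) *
        ∑ γ : Fq p e, sP p e σ (Finset.univ \ J) γ * (xc p e σ γ)⁻¹ =
      ∑ γ : Fq p e, ∑ J ∈ Finset.univ.powerset.filter cond,
        ((if J ⊆ U then (-1 : F p e σ) else 0) + (if J ⊆ V then -1 else 0)) *
          (sP p e σ (Finset.univ \ J) γ * (xc p e σ γ)⁻¹) := by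
    rw [Finset.sum_congr rfl (fun J _ => Finset.mul_sum _ _ _), Finset.sum_comm]
  rw [hswap, ← Finset.sum_sub_distrib]
  exact Finset.sum_congr rfl (fun γ _ => hkey γ)


end TwistedPowerSums
end
end

section
/- Fix an integer d ≥ 1. For n ∈ A⁺(d) and m ∈ A⁺(<d), set S_{n,m} = {(n + μm, n + νm) : μ, ν ∈ 𝔽_q, μ ≠ ν}, a subset of A⁺(d) × A⁺(d) ∖ Δ. Then: (1) S_{n,m} ∩ S_{n',m'} ≠ ∅ if and only if m = m' and n = n' + λm' for some λ ∈ 𝔽_q; (2) if S_{n,m} ∩ S_{n',m'} ≠ ∅ then S_{n,m} = S_{n',m'}; (3) for every (a, b) ∈ A⁺(d) × A⁺(d) ∖ Δ there exists (n, m) ∈ A⁺(d) × A⁺(<d) with (a, b) ∈ S_{n,m}. Consequently the distinct sets S_{n,m} form a partition of A⁺(d) × A⁺(d) ∖ Δ. -/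
/- Lemma 15 of Pellarin, "A sum-shuffle formula for zeta values in Tate algebras"
(after Thakur): for `d ≥ 1`, the sets `S_{n,m} = {(n + μm, n + νm) : μ ≠ ν ∈ 𝔽_q}`,
for `n ∈ A⁺(d)` and `m ∈ A⁺(<d)`, form a partition of `A⁺(d) × A⁺(d) ∖ Δ`. -/

noncomputable section

namespace ThakurPartition

variable (p e : ℕ) [Fact p.Prime]

abbrev Fq : Type := GaloisField p e

/-- `A⁺(d)`, the set of monic polynomials of degree `d` in `A = 𝔽_q[θ]`. -/
def Aplus (d : ℕ) : Set (Polynomial (Fq p e)) := {a | a.Monic ∧ a.natDegree = d}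

/-- `A⁺(<d)`, the set of monic polynomials of degree `< d` in `A = 𝔽_q[θ]`. -/
def AplusLt (d : ℕ) : Set (Polynomial (Fq p e)) := {a | a.Monic ∧ a.natDegree < d}

/-- `S_{n,m} = {(n + μm, n + νm) : μ, ν ∈ 𝔽_q, μ ≠ ν}`. -/
def Snm (n m : Polynomial (Fq p e)) : Set (Polynomial (Fq p e) × Polynomial (Fq p e)) :=
  {x | ∃ μ ν : Fq p e, μ ≠ ν ∧ x = (n + Polynomial.C μ * m, n + Polynomial.C ν * m)}

open Polynomial

lemma key {α β : Fq p e} {m m' : Polynomial (Fq p e)} (hm : m.Monic) (hm' : m'.Monic)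
    (hα : α ≠ 0) (h : C α * m = C β * m') : α = β ∧ m = m' := by
  have hab : α = β := by
    have := congrArg leadingCoeff h
    simpa [leadingCoeff_mul, hm.leadingCoeff, hm'.leadingCoeff] using this
  subst hab
  exact ⟨rfl, mul_left_cancel₀ (by simpa using hα) h⟩

lemma Snm_shift (n m : Polynomial (Fq p e)) (lam : Fq p e) :
    Snm p e (n + C lam * m) m = Snm p e n m := by
  ext x
  constructor
  · rintro ⟨μ, ν, hμν, rfl⟩
    exact ⟨lam + μ, lam + ν, by simpa using hμν, by simp [C_add]; constructor <;> ring⟩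
  · rintro ⟨μ, ν, hμν, rfl⟩
    refine ⟨μ - lam, ν - lam, by simpa [sub_eq_sub_iff_add_eq_add] using hμν, ?_⟩
    simp [C_sub]; constructor <;> ring

/-- **Lemma 15**: (0) `S_{n,m} ⊆ A⁺(d) × A⁺(d) ∖ Δ`; (1) `S_{n,m} ∩ S_{n',m'} ≠ ∅` iff
`m = m'` and `n = n' + λm'` for some `λ ∈ 𝔽_q`; (2) if `S_{n,m} ∩ S_{n',m'} ≠ ∅` then
`S_{n,m} = S_{n',m'}`; (3) every element of `A⁺(d) × A⁺(d) ∖ Δ` lies in some `S_{n,m}`.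
Consequently the distinct sets `S_{n,m}` form a partition of `A⁺(d) × A⁺(d) ∖ Δ`. -/
theorem Snm_partition (he : 1 ≤ e) (d : ℕ) (hd : 1 ≤ d) :
    (∀ n ∈ Aplus p e d, ∀ m ∈ AplusLt p e d,
      Snm p e n m ⊆ {x | x.1 ∈ Aplus p e d ∧ x.2 ∈ Aplus p e d ∧ x.1 ≠ x.2}) ∧
    (∀ n ∈ Aplus p e d, ∀ m ∈ AplusLt p e d, ∀ n' ∈ Aplus p e d, ∀ m' ∈ AplusLt p e d,
      ((Snm p e n m ∩ Snm p e n' m').Nonempty ↔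
        m = m' ∧ ∃ lam : Fq p e, n = n' + Polynomial.C lam * m')) ∧
    (∀ n ∈ Aplus p e d, ∀ m ∈ AplusLt p e d, ∀ n' ∈ Aplus p e d, ∀ m' ∈ AplusLt p e d,
      (Snm p e n m ∩ Snm p e n' m').Nonempty → Snm p e n m = Snm p e n' m') ∧
    (∀ a ∈ Aplus p e d, ∀ b ∈ Aplus p e d, a ≠ b →
      ∃ n ∈ Aplus p e d, ∃ m ∈ AplusLt p e d, (a, b) ∈ Snm p e n m) := by
  -- basic facts
  have hmemP : ∀ n ∈ Aplus p e d, ∀ m ∈ AplusLt p e d, ∀ μ : Fq p e,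
      n + C μ * m ∈ Aplus p e d := by
    rintro n ⟨hn, hnd⟩ m ⟨hm, hmd⟩ μ
    have hdeg : (C μ * m).degree < n.degree := by
      calc (C μ * m).degree ≤ degree (C μ) + degree m := degree_mul_le _ _
        _ ≤ 0 + degree m := add_le_add degree_C_le le_rfl
        _ = degree m := by rw [zero_add]
        _ ≤ (m.natDegree : WithBot ℕ) := degree_le_natDegree
        _ < (d : WithBot ℕ) := by exact_mod_cast hmd
        _ = n.degree := by rw [degree_eq_natDegree hn.ne_zero, hnd]
    refine ⟨hn.add_of_left hdeg, ?_⟩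
    exact (natDegree_eq_of_degree_eq (degree_add_eq_left_of_degree_lt hdeg)).trans hnd
  have hforward : ∀ (n m n' m' : Polynomial (Fq p e)), m.Monic → m'.Monic →
      (Snm p e n m ∩ Snm p e n' m').Nonempty →
      m = m' ∧ ∃ lam : Fq p e, n = n' + C lam * m' := by
    rintro n m n' m' hm hm' ⟨x, ⟨μ, ν, hμν, rfl⟩, μ', ν', hμν', hx⟩
    rw [Prod.mk.injEq] at hx
    obtain ⟨h1, h2⟩ := hx
    have hsub : C (μ - ν) * m = C (μ' - ν') * m' := by
      have := congrArg₂ (· - ·) h1 h2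
      simp only [C_sub] at *
      ring_nf
      ring_nf at this
      linear_combination this
    obtain ⟨hαβ, hmm⟩ := key p e hm hm' (sub_ne_zero.mpr hμν) hsub
    refine ⟨hmm, μ' - μ, ?_⟩
    subst hmm
    have : n + C μ * m = n' + C μ' * m := h1
    rw [C_sub]
    linear_combination this
  refine ⟨?_, ?_, ?_, ?_⟩
  · rintro n hn m hm x ⟨μ, ν, hμν, rfl⟩
    refine ⟨hmemP n hn m hm μ, hmemP n hn m hm ν, ?_⟩
    simp only [ne_eq, add_right_inj]
    intro h
    have : (C μ - C ν) * m = 0 := by linear_combination h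
    rcases mul_eq_zero.mp this with h' | h'
    · exact hμν (by simpa [sub_eq_zero, C_inj] using h')
    · exact hm.1.ne_zero h'
  · rintro n hn m hm n' hn' m' hm'
    constructor
    · exact hforward n m n' m' hm.1 hm'.1
    · rintro ⟨rfl, lam, rfl⟩
      refine ⟨(n' + C lam * m, n' + C lam * m + m), ⟨0, 1, one_ne_zero.symm, by simp⟩,
        ⟨lam, lam + 1, by simp, ?_⟩⟩
      simp [C_add]; ring
  · rintro n hn m hm n' hn' m' hm' hne
    obtain ⟨h1, lam, h2⟩ := hforward n m n' m' hm.1 hm'.1 hne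
    subst h1; subst h2
    exact Snm_shift p e n' m lam
  · rintro a ⟨ha, had⟩ b ⟨hb, hbd⟩ hab
    have hab0 : a - b ≠ 0 := sub_ne_zero.mpr hab
    set c := (a - b).leadingCoeff with hc
    have hc0 : c ≠ 0 := by simpa [hc] using hab0
    set m : Polynomial (Fq p e) := C c⁻¹ * (a - b) with hmdef
    have hmmonic : m.Monic := by
      have : m.leadingCoeff = 1 := by
        rw [hmdef, leadingCoeff_mul, leadingCoeff_C, inv_mul_cancel₀ hc0]
      exact this
    have hdeglt : (a - b).degree < (d : WithBot ℕ) := by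
      have := degree_sub_lt
        (by rw [degree_eq_natDegree ha.ne_zero, degree_eq_natDegree hb.ne_zero, had, hbd])
        ha.ne_zero (ha.leadingCoeff.trans hb.leadingCoeff.symm)
      rwa [degree_eq_natDegree ha.ne_zero, had] at this
    have hmd : m.natDegree < d := by
      have hdm : m.degree < (d : WithBot ℕ) := by
        calc m.degree ≤ degree (C c⁻¹) + degree (a - b) := degree_mul_le _ _
          _ ≤ 0 + degree (a - b) := add_le_add degree_C_le le_rfl
          _ = (a - b).degree := by rw [zero_add]
          _ < (d : WithBot ℕ) := hdeglt
      exact (natDegree_lt_iff_degree_lt hmmonic.ne_zero).mpr hdm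
    have h2 : b = a + C (-c) * m := by
      rw [hmdef, map_neg, neg_mul, ← mul_assoc, ← C_mul, mul_inv_cancel₀ hc0, map_one, one_mul]
      ring
    refine ⟨a, ⟨ha, had⟩, m, ⟨hmmonic, hmd⟩, 0, -c, ?_, ?_⟩
    · intro h; exact hc0 (by simpa using h.symm)
    · rw [map_zero, zero_mul, add_zero, ← h2]
  done

end ThakurPartition
end
end
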